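/- (Correctness of Construction 4) Let n ≥ 5 be prime. Then the code C_{U_2} is an undirected double-node-erasure-correcting code: for any two distinct indices i, j ∈ [n], any two labelings in C_{U_2} that agree on every unordered pair ⟨k,ℓ⟩ with k ∉ {i,j} and ℓ ∉ {i,j} are equal. -/
import Mathlib


open Finset

/-- The code `C_{U_2}` (Construction 4).  A labeling of the complete undirected graph with
self-loops on `n` nodes is encoded as a symmetric function `L : Fin n → Fin n → ZMod 2`.
The constraints are: for `h ∈ [n-2]`, the sum of `L` over `S'_h = {⟨h,ℓ⟩ : ℓ ∈ [n] \ {n-2}}`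
is `0`; the sum over `S'_{n-2} = {⟨ℓ,ℓ⟩ : ℓ ∈ [n] \ {n-2}}` is `0`; and for `m ∈ [n]`, the
sum over `D'_m = {⟨k,ℓ⟩ : k,ℓ ∈ [n-1], ⟨k+ℓ⟩_n = m} ∪ {⟨n-2,n-1⟩}` is `0`, each unordered
pair counted once (here represented by ordered pairs `(k,ℓ)` with `k ≤ ℓ`). -/
def CU2 (n : ℕ) (hn : 5 ≤ n) : Set (Fin n → Fin n → ZMod 2) :=
  {L | (∀ k ℓ : Fin n, L k ℓ = L ℓ k) ∧
    (∀ h : Fin n, (h : ℕ) < n - 2 →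
      ∑ ℓ ∈ univ.filter (fun ℓ : Fin n => (ℓ : ℕ) ≠ n - 2), L h ℓ = 0) ∧
    (∑ ℓ ∈ univ.filter (fun ℓ : Fin n => (ℓ : ℕ) ≠ n - 2), L ℓ ℓ = 0) ∧
    (∀ m : ℕ, m < n →
      (∑ p ∈ univ.filter (fun p : Fin n × Fin n =>
          (p.1 : ℕ) ≤ (p.2 : ℕ) ∧ (p.1 : ℕ) < n - 1 ∧ (p.2 : ℕ) < n - 1 ∧
            ((p.1 : ℕ) + (p.2 : ℕ)) % n = m),
          L p.1 p.2) + L ⟨n - 2, by omega⟩ ⟨n - 1, by omega⟩ = 0)}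


section CU2helpers

variable {n : ℕ}

private lemma CU2aux_addmod_eq (hn : 0 < n) {m a b : ℕ} (hm : m < n) (ha : a < n) (hb : b < n) :
    (a + b) % n = m ↔ (a + b = m ∨ a + b = m + n) := by
  rcases Nat.lt_or_ge (a + b) n with h | h
  · rw [Nat.mod_eq_of_lt h]; omega
  · rw [Nat.mod_eq_sub_mod h, Nat.mod_eq_of_lt (by omega)]; omega

private lemma CU2aux_mod_cancel (hn : 0 < n) {a b c : ℕ} (hb : b < n) (hc : c < n)
    (h : (a + b) % n = (a + c) % n) : b = c := by
  have : b ≡ c [MOD n] := Nat.ModEq.add_left_cancel' a h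
  rwa [Nat.ModEq, Nat.mod_eq_of_lt hb, Nat.mod_eq_of_lt hc] at this

private lemma CU2aux_add_solve (hn : 0 < n) {m a : ℕ} (hm : m < n) (ha : a < n) :
    (a + (m + (n - a)) % n) % n = m := by
  have hb : (m + (n - a)) % n < n := Nat.mod_lt _ hn
  rw [CU2aux_addmod_eq hn hm ha hb]
  rcases Nat.lt_or_ge (m + (n - a)) n with h2 | h2
  · rw [Nat.mod_eq_of_lt h2]; omega
  · rw [Nat.mod_eq_sub_mod h2, Nat.mod_eq_of_lt (by omega)]; omega

end CU2helpers

private lemma CU2aux_rowEval (i j : Fin n) (hij : i ≠ j) (D : Fin n → Fin n → ZMod 2)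
    (hsupp : ∀ k l : Fin n, k ≠ i → k ≠ j → l ≠ i → l ≠ j → D k l = 0)
    (h : Fin n) (hhi : h ≠ i) (hhj : h ≠ j) :
    ∑ ℓ ∈ univ.filter (fun ℓ : Fin n => (ℓ : ℕ) ≠ n - 2), D h ℓ =
      (if (i : ℕ) ≠ n - 2 then D h i else 0) + (if (j : ℕ) ≠ n - 2 then D h j else 0) := by
  rw [← Finset.sum_filter_of_ne (p := fun ℓ => ℓ ∈ ({i, j} : Finset (Fin n)))
      (fun x _ hx => by
        by_contra hmem
        simp only [Finset.mem_insert, Finset.mem_singleton] at hmem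
        push_neg at hmem
        exact hx (hsupp h x hhi hhj hmem.1 hmem.2)),
    Finset.filter_comm, Finset.filter_univ_mem, Finset.sum_filter, Finset.sum_pair hij]


private lemma CU2aux_diagEval {n : ℕ} (i j : Fin n) (hij : i ≠ j) (D : Fin n → Fin n → ZMod 2)
    (hsupp : ∀ k l : Fin n, k ≠ i → k ≠ j → l ≠ i → l ≠ j → D k l = 0) :
    ∑ ℓ ∈ univ.filter (fun ℓ : Fin n => (ℓ : ℕ) ≠ n - 2), D ℓ ℓ =
      (if (i : ℕ) ≠ n - 2 then D i i else 0) + (if (j : ℕ) ≠ n - 2 then D j j else 0) := by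
  rw [← Finset.sum_filter_of_ne (p := fun ℓ => ℓ ∈ ({i, j} : Finset (Fin n)))
      (fun x _ hx => by
        by_contra hmem
        simp only [Finset.mem_insert, Finset.mem_singleton] at hmem
        push_neg at hmem
        exact hx (hsupp x x hmem.1 hmem.2 hmem.1 hmem.2)),
    Finset.filter_comm, Finset.filter_univ_mem, Finset.sum_filter, Finset.sum_pair hij]

private lemma CU2aux_lineEval (hn : 5 ≤ n) (i j : Fin n) (hij : i ≠ j) (D : Fin n → Fin n → ZMod 2)
    (hsym : ∀ k l, D k l = D l k)
    (hsupp : ∀ k l : Fin n, k ≠ i → k ≠ j → l ≠ i → l ≠ j → D k l = 0)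
    (m : ℕ) (hm : m < n) (Ti Tj : Fin n)
    (hTi : ((i:ℕ) + (Ti:ℕ)) % n = m) (hTj : ((j:ℕ) + (Tj:ℕ)) % n = m) :
    (∑ p ∈ univ.filter (fun p : Fin n × Fin n =>
        (p.1 : ℕ) ≤ (p.2 : ℕ) ∧ (p.1 : ℕ) < n - 1 ∧ (p.2 : ℕ) < n - 1 ∧
          ((p.1 : ℕ) + (p.2 : ℕ)) % n = m), D p.1 p.2)
    = if Ti = j then (if (i:ℕ) < n-1 ∧ (j:ℕ) < n-1 then D i j else 0)
      else (if (i:ℕ) < n-1 ∧ (Ti:ℕ) < n-1 then D i Ti else 0)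
         + (if (j:ℕ) < n-1 ∧ (Tj:ℕ) < n-1 then D j Tj else 0) := by
  have hn0 : 0 < n := by omega
  set ci : Fin n × Fin n := if (i:ℕ) ≤ (Ti:ℕ) then (i, Ti) else (Ti, i) with hci
  set cj : Fin n × Fin n := if (j:ℕ) ≤ (Tj:ℕ) then (j, Tj) else (Tj, j) with hcj
  have key : ∀ p : Fin n × Fin n,
      p ∈ univ.filter (fun p : Fin n × Fin n =>
        (p.1 : ℕ) ≤ (p.2 : ℕ) ∧ (p.1 : ℕ) < n - 1 ∧ (p.2 : ℕ) < n - 1 ∧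
          ((p.1 : ℕ) + (p.2 : ℕ)) % n = m) →
      D p.1 p.2 ≠ 0 → p ∈ ({ci, cj} : Finset (Fin n × Fin n)) := by
    intro p hp hD
    simp only [Finset.mem_filter, Finset.mem_univ, true_and] at hp
    obtain ⟨hord, h1, h2, hmod⟩ := hp
    have htouch : p.1 = i ∨ p.1 = j ∨ p.2 = i ∨ p.2 = j := by
      by_contra hcon; push_neg at hcon
      exact hD (hsupp _ _ hcon.1 hcon.2.1 hcon.2.2.1 hcon.2.2.2)
    simp only [Finset.mem_insert, Finset.mem_singleton]
    rcases htouch with h | h | h | h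
    · left
      have hmod' : ((i:ℕ) + (p.2:ℕ)) % n = m := by rw [← h]; exact hmod
      have hv : (p.2 : ℕ) = (Ti : ℕ) :=
        CU2aux_mod_cancel hn0 p.2.is_lt Ti.is_lt (hmod'.trans hTi.symm)
      have hp2 : p.2 = Ti := Fin.ext hv
      have hle : (i:ℕ) ≤ (Ti:ℕ) := by rw [← hv, ← h]; exact hord
      rw [hci, if_pos hle, ← h, ← hp2]
    · right
      have hmod' : ((j:ℕ) + (p.2:ℕ)) % n = m := by rw [← h]; exact hmod
      have hv : (p.2 : ℕ) = (Tj : ℕ) :=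
        CU2aux_mod_cancel hn0 p.2.is_lt Tj.is_lt (hmod'.trans hTj.symm)
      have hp2 : p.2 = Tj := Fin.ext hv
      have hle : (j:ℕ) ≤ (Tj:ℕ) := by rw [← hv, ← h]; exact hord
      rw [hcj, if_pos hle, ← h, ← hp2]
    · left
      have hmod' : ((i:ℕ) + (p.1:ℕ)) % n = m := by rw [← h, Nat.add_comm]; exact hmod
      have hv : (p.1 : ℕ) = (Ti : ℕ) :=
        CU2aux_mod_cancel hn0 p.1.is_lt Ti.is_lt (hmod'.trans hTi.symm)
      have hp1 : p.1 = Ti := Fin.ext hv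
      by_cases hle : (i:ℕ) ≤ (Ti:ℕ)
      · have hie : (Ti:ℕ) = (i:ℕ) := by
          have := h ▸ hord; omega
        rw [hci, if_pos hle]
        have hp1i : p.1 = i := Fin.ext (by omega)
        have hp2Ti : p.2 = Ti := by rw [h]; exact Fin.ext hie.symm
        rw [← hp1i, ← hp2Ti]
      · rw [hci, if_neg hle, ← h, ← hp1]
    · right
      have hmod' : ((j:ℕ) + (p.1:ℕ)) % n = m := by rw [← h, Nat.add_comm]; exact hmod
      have hv : (p.1 : ℕ) = (Tj : ℕ) :=
        CU2aux_mod_cancel hn0 p.1.is_lt Tj.is_lt (hmod'.trans hTj.symm)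
      have hp1 : p.1 = Tj := Fin.ext hv
      by_cases hle : (j:ℕ) ≤ (Tj:ℕ)
      · have hje : (Tj:ℕ) = (j:ℕ) := by
          have := h ▸ hord; omega
        rw [hcj, if_pos hle]
        have hp1j : p.1 = j := Fin.ext (by omega)
        have hp2Tj : p.2 = Tj := by rw [h]; exact Fin.ext hje.symm
        rw [← hp1j, ← hp2Tj]
      · rw [hcj, if_neg hle, ← h, ← hp1]
  rw [← Finset.sum_filter_of_ne key, Finset.filter_comm, Finset.filter_univ_mem,
    Finset.sum_filter]
  by_cases hTij : Ti = j
  · -- single pair case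
    have hmodij : ((i:ℕ) + (j:ℕ)) % n = m := by rw [← hTij]; exact hTi
    have hmodji : ((j:ℕ) + (i:ℕ)) % n = m := by rw [Nat.add_comm]; exact hmodij
    have hTji : Tj = i := Fin.ext (CU2aux_mod_cancel hn0 Tj.is_lt i.is_lt (hTj.trans hmodji.symm))
    have hcc : cj = ci := by
      rw [hci, hcj, hTij, hTji]
      have hne : (i:ℕ) ≠ (j:ℕ) := fun h => hij (Fin.ext h)
      by_cases hle : (i:ℕ) ≤ (j:ℕ)
      · rw [if_pos hle, if_neg (by omega)]
      · rw [if_neg hle, if_pos (by omega)]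
    rw [hcc, Finset.insert_eq_self.2 (Finset.mem_singleton_self ci), Finset.sum_singleton,
      if_pos hTij]
    by_cases hle : (i:ℕ) ≤ (Ti:ℕ)
    · rw [hci, if_pos hle]
      dsimp only
      rw [hTij] at hle
      by_cases hb : (i:ℕ) < n-1 ∧ (j:ℕ) < n-1
      · rw [hTij, if_pos ⟨hle, hb.1, hb.2, hmodij⟩, if_pos hb]
      · rw [hTij, if_neg (by tauto), if_neg hb]
    · rw [hci, if_neg hle]
      dsimp only
      rw [hTij] at hle
      by_cases hb : (i:ℕ) < n-1 ∧ (j:ℕ) < n-1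
      · rw [hTij, if_pos ⟨by omega, hb.2, hb.1, hmodji⟩, if_pos hb, hsym]
      · rw [hTij, if_neg (by tauto), if_neg hb]
  · -- two distinct pairs
    have hTji : Tj ≠ i := by
      intro hcon
      apply hTij
      have hmodji : ((j:ℕ) + (i:ℕ)) % n = m := by
        rw [← Fin.val_eq_val] at hcon; rw [← hcon]; exact hTj
      have hmodij : ((i:ℕ) + (j:ℕ)) % n = m := by rw [Nat.add_comm]; exact hmodji
      exact Fin.ext (CU2aux_mod_cancel hn0 Ti.is_lt j.is_lt (hTi.trans hmodij.symm))
    have hne : ci ≠ cj := by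
      have e1 : (i:ℕ) ≠ (j:ℕ) := fun h => hij (Fin.ext h)
      have e2 : (Ti:ℕ) ≠ (j:ℕ) := fun h => hTij (Fin.ext h)
      have e3 : (Tj:ℕ) ≠ (i:ℕ) := fun h => hTji (Fin.ext h)
      rw [hci, hcj]
      split_ifs with u v v <;>
        (intro h; rw [Prod.ext_iff] at h; dsimp only at h;
         rw [← Fin.val_eq_val, ← Fin.val_eq_val] at h; omega)
    rw [Finset.sum_pair hne, if_neg hTij]
    congr 1
    · by_cases hle : (i:ℕ) ≤ (Ti:ℕ)
      · rw [hci, if_pos hle]; dsimp only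
        by_cases hb : (i:ℕ) < n-1 ∧ (Ti:ℕ) < n-1
        · rw [if_pos ⟨hle, hb.1, hb.2, hTi⟩, if_pos hb]
        · rw [if_neg (by tauto), if_neg hb]
      · rw [hci, if_neg hle]; dsimp only
        by_cases hb : (i:ℕ) < n-1 ∧ (Ti:ℕ) < n-1
        · rw [if_pos ⟨by omega, hb.2, hb.1, by rw [Nat.add_comm]; exact hTi⟩, if_pos hb, hsym]
        · rw [if_neg (by tauto), if_neg hb]
    · by_cases hle : (j:ℕ) ≤ (Tj:ℕ)
      · rw [hcj, if_pos hle]; dsimp only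
        by_cases hb : (j:ℕ) < n-1 ∧ (Tj:ℕ) < n-1
        · rw [if_pos ⟨hle, hb.1, hb.2, hTj⟩, if_pos hb]
        · rw [if_neg (by tauto), if_neg hb]
      · rw [hcj, if_neg hle]; dsimp only
        by_cases hb : (j:ℕ) < n-1 ∧ (Tj:ℕ) < n-1
        · rw [if_pos ⟨by omega, hb.2, hb.1, by rw [Nat.add_comm]; exact hTj⟩, if_pos hb, hsym]
        · rw [if_neg (by tauto), if_neg hb]

set_option maxHeartbeats 2000000 in
private lemma CU2aux_case1 {n : ℕ} (hn : 5 ≤ n) (hp : n.Prime) (i j : Fin n) (hij : i ≠ j)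
    (hi : (i:ℕ) < n - 2) (hj : (j:ℕ) < n - 2)
    (D : Fin n → Fin n → ZMod 2)
    (hsym : ∀ k l, D k l = D l k)
    (hsupp : ∀ k l : Fin n, k ≠ i → k ≠ j → l ≠ i → l ≠ j → D k l = 0)
    (hrow : ∀ h : Fin n, (h : ℕ) < n - 2 →
      ∑ ℓ ∈ univ.filter (fun ℓ : Fin n => (ℓ : ℕ) ≠ n - 2), D h ℓ = 0)
    (hdiag : ∑ ℓ ∈ univ.filter (fun ℓ : Fin n => (ℓ : ℕ) ≠ n - 2), D ℓ ℓ = 0)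
    (hline : ∀ m : ℕ, m < n →
      (∑ p ∈ univ.filter (fun p : Fin n × Fin n =>
          (p.1 : ℕ) ≤ (p.2 : ℕ) ∧ (p.1 : ℕ) < n - 1 ∧ (p.2 : ℕ) < n - 1 ∧
            ((p.1 : ℕ) + (p.2 : ℕ)) % n = m),
          D p.1 p.2) + D ⟨n - 2, by omega⟩ ⟨n - 1, by omega⟩ = 0) :
    ∀ k l, D k l = 0 := by
  haveI : Fact n.Prime := ⟨hp⟩
  haveI : NeZero n := ⟨by omega⟩
  have hn0 : 0 < n := by omega
  have F2 : ∀ a b : ZMod 2, a + b = 0 → a = b := by decide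
  set eF : Fin n := ⟨n - 2, by omega⟩ with heF
  set fF : Fin n := ⟨n - 1, by omega⟩ with hfF
  set ψ : ZMod n → Fin n := fun z => ⟨z.val, z.val_lt⟩ with hψ
  have hψv : ∀ z : ZMod n, ((ψ z : Fin n) : ℕ) = z.val := fun z => rfl
  have hvcast : ∀ z : ZMod n, ((z.val : ℕ) : ZMod n) = z := fun z => ZMod.natCast_rightInverse z
  set iZ : ZMod n := ((i : ℕ) : ZMod n) with hiZ
  set jZ : ZMod n := ((j : ℕ) : ZMod n) with hjZ
  set eZ : ZMod n := ((n - 2 : ℕ) : ZMod n) with heZ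
  set fZ : ZMod n := ((n - 1 : ℕ) : ZMod n) with hfZ
  have hiZv : iZ.val = (i : ℕ) := ZMod.val_natCast_of_lt i.is_lt
  have hjZv : jZ.val = (j : ℕ) := ZMod.val_natCast_of_lt j.is_lt
  have heZv : eZ.val = n - 2 := ZMod.val_natCast_of_lt (by omega)
  have hfZv : fZ.val = n - 1 := ZMod.val_natCast_of_lt (by omega)
  have hψi : ψ iZ = i := Fin.ext hiZv
  have hψj : ψ jZ = j := Fin.ext hjZv
  have hψe : ψ eZ = eF := Fin.ext heZv
  have hψf : ψ fZ = fF := Fin.ext hfZv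
  have hvinj : ∀ z z' : ZMod n, z.val = z'.val → z = z' := by
    intro z z' h; rw [← hvcast z, ← hvcast z', h]
  set δ : ZMod n := jZ - iZ with hδdef
  have hδ : δ ≠ 0 := by
    rw [hδdef, sub_ne_zero]
    intro h; exact hij (Fin.ext (by rw [← hiZv, ← hjZv, h]))
  -- the mod-helper
  have modeq_helper : ∀ (a m : ℕ), m < n → ((a : ℕ) : ZMod n) = (m : ZMod n) → a % n = m := by
    intro a m hm h
    have := (ZMod.natCast_eq_natCast_iff _ _ _).1 h
    rwa [Nat.ModEq, Nat.mod_eq_of_lt hm] at this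
  -- e,f not failed
  have heFi : eF ≠ i := by intro h; rw [← h] at hi; simp [heF] at hi
  have heFj : eF ≠ j := by intro h; rw [← h] at hj; simp [heF] at hj
  have hfFi : fF ≠ i := by intro h; rw [← h] at hi; simp [hfF] at hi; omega
  have hfFj : fF ≠ j := by intro h; rw [← h] at hj; simp [hfF] at hj; omega
  have hDef : D eF fF = 0 := hsupp _ _ heFi heFj hfFi hfFj
  -- X and Y
  set X : ZMod n → ZMod 2 := fun t => if t = fZ then 0 else D i (ψ t) with hX
  set Y : ZMod n → ZMod 2 := fun t => if t = fZ then 0 else D j (ψ t) with hY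
  -- D i j = 0
  have hDij : D i j = 0 := by
    have hm : ((i:ℕ) + (j:ℕ)) % n < n := Nat.mod_lt _ hn0
    have hl := hline _ hm
    rw [CU2aux_lineEval hn i j hij D hsym hsupp _ hm j i rfl (by rw [Nat.add_comm])] at hl
    rw [if_pos rfl, if_pos ⟨by omega, by omega⟩] at hl
    have : D ⟨n-2, by omega⟩ ⟨n-1, by omega⟩ = D eF fF := rfl
    rw [this, hDef, add_zero] at hl
    exact hl
  have hXj : X jZ = 0 := by
    simp only [hX]
    have : jZ ≠ fZ := by intro h; have := hjZv; rw [h, hfZv] at this; omega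
    simp only [if_neg this, hψj]
    exact hDij
  have hXf : X fZ = 0 := by simp [hX]
  -- the line relations
  have R : ∀ t : ZMod n, t ≠ jZ → X t + Y (t - δ) = 0 := by
    intro t ht
    set m : ℕ := ((i:ℕ) + t.val) % n with hm
    have hmlt : m < n := Nat.mod_lt _ hn0
    have hmcast : (m : ZMod n) = iZ + t := by
      rw [hm, ZMod.natCast_mod]; push_cast; rw [hvcast]
    have hTi : ((i:ℕ) + ((ψ t : Fin n):ℕ)) % n = m := by rw [hψv]
    have hTj : ((j:ℕ) + ((ψ (t - δ) : Fin n):ℕ)) % n = m := by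
      apply modeq_helper _ _ hmlt
      push_cast
      rw [hvcast, hmcast]
      show jZ + (t - δ) = iZ + t
      rw [hδdef]
      ring
    have hne : (ψ t : Fin n) ≠ j := by
      intro h
      apply ht
      apply hvinj
      rw [← hψv t, h, hjZv]
    have hl := hline m hmlt
    rw [CU2aux_lineEval hn i j hij D hsym hsupp m hmlt (ψ t) (ψ (t - δ)) hTi hTj,
      if_neg hne] at hl
    have hrw : D ⟨n-2, by omega⟩ ⟨n-1, by omega⟩ = D eF fF := rfl
    rw [hrw, hDef, add_zero] at hl
    -- convert brackets
    have hb1 : ((i:ℕ) < n-1 ∧ ((ψ t : Fin n):ℕ) < n-1) ↔ ¬ (t = fZ) := by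
      rw [hψv]
      constructor
      · intro hb h; rw [h, hfZv] at hb; omega
      · intro h
        refine ⟨by omega, ?_⟩
        have : t.val ≠ n - 1 := by intro hv; exact h (hvinj _ _ (by rw [hv, hfZv]))
        have := t.val_lt; omega
    have hb2 : ((j:ℕ) < n-1 ∧ ((ψ (t-δ) : Fin n):ℕ) < n-1) ↔ ¬ (t - δ = fZ) := by
      rw [hψv]
      constructor
      · intro hb h; rw [h, hfZv] at hb; omega
      · intro h
        refine ⟨by omega, ?_⟩
        have : (t-δ).val ≠ n - 1 := by intro hv; exact h (hvinj _ _ (by rw [hv, hfZv]))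
        have := (t-δ).val_lt; omega
    have e1 : (if t = fZ then (0:ZMod 2) else D i (ψ t)) =
        (if ((i:ℕ) < n-1 ∧ ((ψ t : Fin n):ℕ) < n-1) then D i (ψ t) else 0) := by
      by_cases h1 : t = fZ
      · rw [if_pos h1, if_neg (fun hc => (hb1.1 hc) h1)]
      · rw [if_neg h1, if_pos (hb1.2 h1)]
    have e2 : (if t - δ = fZ then (0:ZMod 2) else D j (ψ (t - δ))) =
        (if ((j:ℕ) < n-1 ∧ ((ψ (t - δ) : Fin n):ℕ) < n-1) then D j (ψ (t - δ)) else 0) := by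
      by_cases h2 : t - δ = fZ
      · rw [if_pos h2, if_neg (fun hc => (hb2.1 hc) h2)]
      · rw [if_neg h2, if_pos (hb2.2 h2)]
    simp only [hX, hY]
    rw [e1, e2]
    exact hl
  -- rows
  have hAB : ∀ h : Fin n, h ≠ i → h ≠ j → (h:ℕ) < n - 2 → D h i + D h j = 0 := by
    intro h hhi hhj hlt
    have := hrow h hlt
    rw [CU2aux_rowEval i j hij D hsupp h hhi hhj, if_pos (by omega), if_pos (by omega)] at this
    exact this
  -- diagonal
  have hdd : D j j = D i i := by
    have := hdiag
    rw [CU2aux_diagEval i j hij D hsupp, if_pos (by omega), if_pos (by omega)] at this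
    exact (F2 _ _ this).symm
  -- conversions
  have hfne : ∀ t : ZMod n, t.val ≠ n - 1 → t ≠ fZ := by
    intro t h hc; rw [hc, hfZv] at h; omega
  have convXY1 : ∀ t : ZMod n, t ≠ eZ → t ≠ jZ → X t = 0 → Y t = 0 := by
    intro t hte htj hx
    by_cases htf : t = fZ
    · simp [hY, htf]
    · by_cases hti : t = iZ
      · simp only [hY, if_neg htf]; rw [hti, hψi, hsym]; exact hDij
      · have hψti : ψ t ≠ i := by intro h; apply hti; apply hvinj; rw [← hψv t, h, hiZv]
        have hψtj : ψ t ≠ j := by intro h; apply htj; apply hvinj; rw [← hψv t, h, hjZv]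
        have hψlt : ((ψ t : Fin n):ℕ) < n - 2 := by
          rw [hψv]
          have h1 : t.val ≠ n - 1 := by intro hv; exact htf (hvinj _ _ (by rw [hv, hfZv]))
          have h2 : t.val ≠ n - 2 := by intro hv; exact hte (hvinj _ _ (by rw [hv, heZv]))
          have := t.val_lt; omega
        have h0 := hAB (ψ t) hψti hψtj hψlt
        have : D (ψ t) i = D (ψ t) j := F2 _ _ h0
        simp only [hY, if_neg htf]
        rw [hsym, ← this, ← hsym]
        simp only [hX, if_neg htf] at hx
        exact hx
  have convXY2 : D i i = 0 → ∀ t : ZMod n, t ≠ eZ → X t = 0 → Y t = 0 := by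
    intro hAi t hte hx
    by_cases htj : t = jZ
    · have hne : jZ ≠ fZ := hfne _ (by rw [hjZv]; omega)
      simp only [hY, htj, if_neg hne]
      rw [hψj, hdd]
      exact hAi
    · exact convXY1 t hte htj hx
  have convYX : ∀ t : ZMod n, t ≠ eZ → t ≠ iZ → Y t = 0 → X t = 0 := by
    intro t hte hti hy
    by_cases htf : t = fZ
    · simp [hX, htf]
    · by_cases htj : t = jZ
      · simp only [hX, if_neg htf]; rw [htj, hψj]; exact hDij
      · have hψti : ψ t ≠ i := by intro h; apply hti; apply hvinj; rw [← hψv t, h, hiZv]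
        have hψtj : ψ t ≠ j := by intro h; apply htj; apply hvinj; rw [← hψv t, h, hjZv]
        have hψlt : ((ψ t : Fin n):ℕ) < n - 2 := by
          rw [hψv]
          have h1 : t.val ≠ n - 1 := by intro hv; exact htf (hvinj _ _ (by rw [hv, hfZv]))
          have h2 : t.val ≠ n - 2 := by intro hv; exact hte (hvinj _ _ (by rw [hv, heZv]))
          have := t.val_lt; omega
        have h0 := hAB (ψ t) hψti hψtj hψlt
        have : D (ψ t) i = D (ψ t) j := F2 _ _ h0
        simp only [hX, if_neg htf]
        rw [hsym, this, ← hsym]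
        simp only [hY, if_neg htf] at hy
        exact hy
  -- positions
  set pos : ℕ → ZMod n := fun κ => fZ + (κ : ZMod n) * δ with hpos
  have pos0 : pos 0 = fZ := by simp only [hpos]; push_cast; ring
  have posn : pos n = fZ := by simp only [hpos]; rw [ZMod.natCast_self]; ring
  have pos_succ : ∀ κ : ℕ, pos (κ + 1) = pos κ + δ := by
    intro κ; simp only [hpos]; push_cast; ring
  have pos_inj : ∀ κ κ' : ℕ, pos κ = pos κ' → (κ : ZMod n) = (κ' : ZMod n) := by
    intro κ κ' h
    simp only [hpos] at h
    have h2 := add_left_cancel h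
    exact mul_right_cancel₀ hδ h2
  have cast_inj : ∀ κ κ' : ℕ, κ ≤ n → κ' < n → (κ : ZMod n) = (κ' : ZMod n) → κ = κ' ∨ (κ = n ∧ κ' = 0) := by
    intro κ κ' h1 h2 h
    have := (ZMod.natCast_eq_natCast_iff _ _ _).1 h
    rw [Nat.ModEq, Nat.mod_eq_of_lt h2] at this
    rcases Nat.lt_or_ge κ n with hk | hk
    · left; rw [Nat.mod_eq_of_lt hk] at this; exact this
    · right
      have hkn : κ = n := by omega
      rw [hkn, Nat.mod_self] at this
      exact ⟨hkn, this.symm⟩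
  set K : ℕ := ((jZ - fZ) * δ⁻¹).val with hK
  set E : ℕ := ((eZ - fZ) * δ⁻¹).val with hE
  have hKlt : K < n := ZMod.val_lt _
  have hElt : E < n := ZMod.val_lt _
  have hposK : pos K = jZ := by
    simp only [hpos]
    rw [hK, hvcast, mul_assoc, inv_mul_cancel₀ hδ, mul_one]
    ring
  have hposE : pos E = eZ := by
    simp only [hpos]
    rw [hE, hvcast, mul_assoc, inv_mul_cancel₀ hδ, mul_one]
    ring
  have hjZfZ : jZ ≠ fZ := hfne _ (by rw [hjZv]; omega)
  have hiZfZ : iZ ≠ fZ := hfne _ (by rw [hiZv]; omega)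
  have heZfZ : eZ ≠ fZ := hfne _ (by rw [heZv]; omega)
  have hiZjZ : iZ ≠ jZ := by
    intro h; exact hij (Fin.ext (by rw [← hiZv, ← hjZv, h]))
  have heZiZ : eZ ≠ iZ := by
    intro h; have := heZv; rw [h, hiZv] at this; omega
  have heZjZ : eZ ≠ jZ := by
    intro h; have := heZv; rw [h, hjZv] at this; omega
  have hK0 : K ≠ 0 := by
    intro h
    apply hjZfZ
    rw [← hposK, h, pos0]
  have hK1 : K ≠ 1 := by
    intro h
    have h1 : pos 1 = jZ := by rw [← h, hposK]
    simp only [hpos] at h1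
    push_cast at h1
    rw [one_mul, hδdef] at h1
    apply hiZfZ
    have h2 : iZ = fZ := by linear_combination -h1
    exact h2
  have hE0 : E ≠ 0 := by
    intro h; apply heZfZ; rw [← hposE, h, pos0]
  -- characterization of special positions
  have pos_ne_of_ne : ∀ κ κ' : ℕ, κ ≤ n → κ' < n → κ' ≠ 0 → κ ≠ κ' → pos κ ≠ pos κ' := by
    intro κ κ' h1 h2 h3 h4 hc
    rcases cast_inj κ κ' h1 h2 (pos_inj _ _ hc) with h | h
    · exact h4 h
    · exact h3 h.2
  have hposj_ne : ∀ κ : ℕ, κ ≤ n → κ ≠ K → pos κ ≠ jZ := by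
    intro κ h1 h2
    rw [← hposK]
    exact pos_ne_of_ne κ K h1 hKlt hK0 h2
  have hpose_ne : ∀ κ : ℕ, κ ≤ n → κ ≠ E → pos κ ≠ eZ := by
    intro κ h1 h2
    rw [← hposE]
    exact pos_ne_of_ne κ E h1 hElt hE0 h2
  have hposi : pos (K - 1) = iZ := by
    have h1 : pos ((K-1) + 1) = pos (K-1) + δ := pos_succ _
    have h2 : (K - 1) + 1 = K := by omega
    rw [h2, hposK] at h1
    rw [hδdef] at h1
    linear_combination -h1
  have hEK : E ≠ K := by
    intro h
    apply heZjZ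
    rw [← hposE, h, hposK]
  have hEK1 : E ≠ K - 1 := by
    intro h
    apply heZiZ
    rw [← hposE, h, hposi]
  -- fwd and bwd propagation
  have fwd : ∀ (b : ℕ), (∀ κ, κ < b → (X (pos κ) = 0 → Y (pos κ) = 0)) →
      ∀ κ, κ ≤ b → X (pos κ) = 0 := by
    intro b hconv κ
    induction κ with
    | zero => intro _; rw [pos0]; exact hXf
    | succ k ih =>
      intro hk
      have hxk := ih (by omega)
      by_cases hjc : pos (k+1) = jZ
      · rw [hjc]; exact hXj
      · have hr := R _ hjc
        have heq : pos (k+1) - δ = pos k := by rw [pos_succ]; ring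
        rw [heq, hconv k (by omega) hxk, add_zero] at hr
        exact hr
  have bwd : ∀ (a b : ℕ), a ≤ b → X (pos b) = 0 →
      (∀ κ, a < κ → κ ≤ b → pos κ ≠ jZ) →
      (∀ κ, a ≤ κ → κ < b → (Y (pos κ) = 0 → X (pos κ) = 0)) →
      ∀ κ, a ≤ κ → κ ≤ b → X (pos κ) = 0 := by
    intro a b hab hXb hrel hconv
    have main : ∀ d κ, κ ≤ b → b ≤ κ + d → a ≤ κ → X (pos κ) = 0 := by
      intro d
      induction d with
      | zero =>
        intro κ h1 h2 _
        have : κ = b := by omega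
        rw [this]; exact hXb
      | succ d ih =>
        intro κ h1 h2 ha
        by_cases hkb : b ≤ κ + d
        · exact ih κ h1 hkb ha
        · have hk1 : κ + 1 ≤ b := by omega
          have hX1 : X (pos (κ+1)) = 0 := ih (κ+1) hk1 (by omega) (by omega)
          have hr := R (pos (κ+1)) (hrel (κ+1) (by omega) hk1)
          have heq : pos (κ+1) - δ = pos κ := by rw [pos_succ]; ring
          rw [heq, hX1, zero_add] at hr
          exact hconv κ ha (by omega) hr
    intro κ h1 h2; exact main (b - κ) κ h2 (by omega) h1
  -- K ≥ 2
  have hK2 : 2 ≤ K := by omega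
  -- main chain: all X (pos κ) = 0 for κ ≤ n
  have hall : ∀ κ, κ ≤ n → X (pos κ) = 0 := by
    rcases lt_or_gt_of_ne hEK with hKE | hKE
    · -- E < K
      have run1 : ∀ κ, κ ≤ E → X (pos κ) = 0 := by
        apply fwd
        intro κ hκ
        exact convXY1 _ (hpose_ne κ (by omega) (by omega)) (hposj_ne κ (by omega) (by omega))
      have run2 : ∀ κ, K ≤ κ → κ ≤ n → X (pos κ) = 0 := by
        apply bwd K n (by omega) (by rw [posn]; exact hXf)
        · intro κ h1 h2; exact hposj_ne κ h2 (by omega)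
        · intro κ h1 h2
          exact convYX _ (hpose_ne κ (by omega) (by omega)) (by rw [← hposi]; exact pos_ne_of_ne κ (K-1) (by omega) (by omega) (by omega) (by omega))
      have hYj : Y (pos K) = 0 := by
        have hr := R (pos (K+1)) (hposj_ne (K+1) (by omega) (by omega))
        have heq : pos (K+1) - δ = pos K := by rw [pos_succ]; ring
        rw [heq, run2 (K+1) (by omega) (by omega), zero_add] at hr
        exact hr
      have hAi : D i i = 0 := by
        rw [hposK] at hYj
        simp only [hY, if_neg hjZfZ] at hYj
        rw [hψj] at hYj
        rw [← hdd]; exact hYj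
      have run3 : ∀ κ, E + 1 ≤ κ → κ ≤ K - 1 → X (pos κ) = 0 := by
        apply bwd (E+1) (K-1) (by omega)
        · rw [hposi]; simp only [hX, if_neg hiZfZ]; rw [hψi]; exact hAi
        · intro κ h1 h2; exact hposj_ne κ (by omega) (by omega)
        · intro κ h1 h2
          exact convYX _ (hpose_ne κ (by omega) (by omega)) (by rw [← hposi]; exact pos_ne_of_ne κ (K-1) (by omega) (by omega) (by omega) (by omega))
      intro κ hκ
      rcases Nat.lt_or_ge κ (E+1) with h | h
      · exact run1 κ (by omega)
      · rcases Nat.lt_or_ge κ K with h2 | h2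
        · exact run3 κ (by omega) (by omega)
        · exact run2 κ (by omega) (by omega)
    · -- K < E
      have run1 : ∀ κ, κ ≤ K - 1 → X (pos κ) = 0 := by
        apply fwd
        intro κ hκ
        exact convXY1 _ (hpose_ne κ (by omega) (by omega)) (hposj_ne κ (by omega) (by omega))
      have hAi : D i i = 0 := by
        have hrr := run1 (K-1) (by omega)
        rw [hposi] at hrr
        simp only [hX, if_neg hiZfZ] at hrr
        rw [hψi] at hrr
        exact hrr
      have run2 : ∀ κ, κ ≤ E → X (pos κ) = 0 := by
        apply fwd
        intro κ hκ
        exact convXY2 hAi _ (hpose_ne κ (by omega) (by omega))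
      have run3 : ∀ κ, E + 1 ≤ κ → κ ≤ n → X (pos κ) = 0 := by
        apply bwd (E+1) n (by omega) (by rw [posn]; exact hXf)
        · intro κ h1 h2; exact hposj_ne κ h2 (by omega)
        · intro κ h1 h2
          exact convYX _ (hpose_ne κ (by omega) (by omega)) (by rw [← hposi]; exact pos_ne_of_ne κ (K-1) (by omega) (by omega) (by omega) (by omega))
      intro κ hκ
      rcases Nat.lt_or_ge κ (E+1) with h | h
      · exact run2 κ (by omega)
      · exact run3 κ (by omega) (by omega)
  -- all X vanish
  have hXall : ∀ t : ZMod n, X t = 0 := by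
    intro t
    have hκ : pos (((t - fZ) * δ⁻¹).val) = t := by
      simp only [hpos]
      rw [hvcast, mul_assoc, inv_mul_cancel₀ hδ, mul_one]
      ring
    rw [← hκ]
    exact hall _ (le_of_lt (ZMod.val_lt _))
  -- harvest row i
  have hAFin : ∀ l : Fin n, (l:ℕ) ≠ n - 1 → D i l = 0 := by
    intro l hl
    have ht := hXall ((l : ℕ) : ZMod n)
    have hv : (((l:ℕ) : ZMod n)).val = (l:ℕ) := ZMod.val_natCast_of_lt l.is_lt
    have : ((l:ℕ) : ZMod n) ≠ fZ := hfne _ (by rw [hv]; exact hl)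
    simp only [hX, if_neg this] at ht
    have hψl : ψ ((l:ℕ) : ZMod n) = l := Fin.ext hv
    rwa [hψl] at ht
  have hAf : D i fF = 0 := by
    have hs := hrow i hi
    have hmem : fF ∈ univ.filter (fun ℓ : Fin n => (ℓ : ℕ) ≠ n - 2) := by
      simp only [Finset.mem_filter, Finset.mem_univ, true_and, hfF]
      omega
    rw [Finset.sum_eq_single_of_mem fF hmem
      (fun b _ hb => hAFin b (fun hv => hb (Fin.ext (by rw [hv]))))] at hs
    exact hs
  have hAall : ∀ l : Fin n, D i l = 0 := by
    intro l
    by_cases hl : (l:ℕ) = n - 1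
    · have : l = fF := Fin.ext (by rw [hl])
      rw [this]; exact hAf
    · exact hAFin l hl
  have hAi : D i i = 0 := hAall i
  -- harvest row j
  have hYe : Y eZ = 0 := by
    have hr := R (pos (E+1)) (hposj_ne (E+1) (by omega) (by omega))
    have heq : pos (E+1) - δ = pos E := by rw [pos_succ]; ring
    rw [heq, hXall, zero_add, hposE] at hr
    exact hr
  have hBFin : ∀ l : Fin n, (l:ℕ) ≠ n - 1 → D j l = 0 := by
    intro l hl
    by_cases hle : (l:ℕ) = n - 2
    · have : l = eF := Fin.ext (by rw [hle])
      rw [this]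
      have hY2 := hYe
      simp only [hY, if_neg heZfZ] at hY2
      rw [hψe] at hY2
      exact hY2
    · have ht : ((l:ℕ) : ZMod n) ≠ eZ := by
        intro h
        have hv : (((l:ℕ) : ZMod n)).val = (l:ℕ) := ZMod.val_natCast_of_lt l.is_lt
        rw [h, heZv] at hv; omega
      have hY2 := convXY2 hAi _ ht (hXall _)
      have hv : (((l:ℕ) : ZMod n)).val = (l:ℕ) := ZMod.val_natCast_of_lt l.is_lt
      have hne : ((l:ℕ) : ZMod n) ≠ fZ := hfne _ (by rw [hv]; exact hl)
      simp only [hY, if_neg hne] at hY2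
      have hψl : ψ ((l:ℕ) : ZMod n) = l := Fin.ext hv
      rwa [hψl] at hY2
  have hBf : D j fF = 0 := by
    have hs := hrow j hj
    have hmem : fF ∈ univ.filter (fun ℓ : Fin n => (ℓ : ℕ) ≠ n - 2) := by
      simp only [Finset.mem_filter, Finset.mem_univ, true_and, hfF]
      omega
    rw [Finset.sum_eq_single_of_mem fF hmem
      (fun b _ hb => hBFin b (fun hv => hb (Fin.ext (by rw [hv]))))] at hs
    exact hs
  have hBall : ∀ l : Fin n, D j l = 0 := by
    intro l
    by_cases hl : (l:ℕ) = n - 1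
    · have : l = fF := Fin.ext (by rw [hl])
      rw [this]; exact hBf
    · exact hBFin l hl
  -- final
  intro k l
  by_cases hk1 : k = i
  · rw [hk1]; exact hAall l
  by_cases hk2 : k = j
  · rw [hk2]; exact hBall l
  by_cases hl1 : l = i
  · rw [hl1, hsym]; exact hAall k
  by_cases hl2 : l = j
  · rw [hl2, hsym]; exact hBall k
  exact hsupp k l hk1 hk2 hl1 hl2

set_option maxHeartbeats 1000000 in
private lemma CU2aux_case2a {n : ℕ} (hn : 5 ≤ n) (i j : Fin n) (hij : i ≠ j)
    (hj : (j:ℕ) = n - 2)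
    (D : Fin n → Fin n → ZMod 2)
    (hsym : ∀ k l, D k l = D l k)
    (hsupp : ∀ k l : Fin n, k ≠ i → k ≠ j → l ≠ i → l ≠ j → D k l = 0)
    (hrow : ∀ h : Fin n, (h : ℕ) < n - 2 →
      ∑ ℓ ∈ univ.filter (fun ℓ : Fin n => (ℓ : ℕ) ≠ n - 2), D h ℓ = 0)
    (hdiag : ∑ ℓ ∈ univ.filter (fun ℓ : Fin n => (ℓ : ℕ) ≠ n - 2), D ℓ ℓ = 0)
    (hline : ∀ m : ℕ, m < n →
      (∑ p ∈ univ.filter (fun p : Fin n × Fin n =>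
          (p.1 : ℕ) ≤ (p.2 : ℕ) ∧ (p.1 : ℕ) < n - 1 ∧ (p.2 : ℕ) < n - 1 ∧
            ((p.1 : ℕ) + (p.2 : ℕ)) % n = m),
          D p.1 p.2) + D ⟨n - 2, by omega⟩ ⟨n - 1, by omega⟩ = 0) :
    ∀ k l, D k l = 0 := by
  have hn0 : 0 < n := by omega
  set eF : Fin n := ⟨n - 2, by omega⟩ with heF
  set fF : Fin n := ⟨n - 1, by omega⟩ with hfF
  have hjeF : j = eF := Fin.ext hj
  have hine : (i:ℕ) ≠ n - 2 := by
    intro h; exact hij (Fin.ext (by rw [h, hj]))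
  -- step 1: rows
  have step1 : ∀ h : Fin n, h ≠ i → (h:ℕ) < n - 2 → D h i = 0 := by
    intro h hhi hlt
    have hhj : h ≠ j := by intro hc; rw [hc, hj] at hlt; omega
    have hs := hrow h hlt
    rw [CU2aux_rowEval i j hij D hsupp h hhi hhj, if_pos hine, if_neg (by omega), add_zero] at hs
    exact hs
  -- step 2: diagonal
  have step2 : D i i = 0 := by
    have hs := hdiag
    rw [CU2aux_diagEval i j hij D hsupp, if_pos hine, if_neg (by omega), add_zero] at hs
    exact hs
  -- keyB: line relations
  have keyB : ∀ ℓ : Fin n, ℓ ≠ i →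
      (if (ℓ:ℕ) < n - 1 then D j ℓ else 0) + D eF fF = 0 := by
    intro ℓ hli
    set m : ℕ := ((j:ℕ) + (ℓ:ℕ)) % n with hm
    have hmlt : m < n := Nat.mod_lt _ hn0
    set Ti : Fin n := ⟨(m + (n - (i:ℕ))) % n, Nat.mod_lt _ hn0⟩ with hTidef
    have hTi : ((i:ℕ) + (Ti:ℕ)) % n = m := CU2aux_add_solve hn0 hmlt i.is_lt
    have hne : Ti ≠ j := by
      intro hc
      apply hli
      apply Fin.ext
      apply CU2aux_mod_cancel hn0 ℓ.is_lt i.is_lt (a := (j:ℕ))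
      have h2 : ((j:ℕ) + (i:ℕ)) % n = m := by
        rw [Nat.add_comm]; rw [hc] at hTi; exact hTi
      rw [h2]
    have hl := hline m hmlt
    rw [CU2aux_lineEval hn i j hij D hsym hsupp m hmlt Ti ℓ hTi hm.symm, if_neg hne] at hl
    have hfirst : (if (i:ℕ) < n-1 ∧ (Ti:ℕ) < n-1 then D i Ti else 0) = 0 := by
      by_cases hc : (i:ℕ) < n-1 ∧ (Ti:ℕ) < n-1
      · rw [if_pos hc]
        by_cases hTii : Ti = i
        · rw [hTii]; exact step2
        · have hTie : (Ti:ℕ) ≠ n - 2 := by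
            intro hc2
            exact hne (Fin.ext (by rw [hc2, hj]))
          rw [hsym]
          exact step1 Ti hTii (by omega)
      · rw [if_neg hc]
    rw [hfirst, zero_add] at hl
    have hrw : D ⟨n-2, by omega⟩ ⟨n-1, by omega⟩ = D eF fF := rfl
    rw [hrw] at hl
    have hjlt : (j:ℕ) < n - 1 := by omega
    by_cases hb : (ℓ:ℕ) < n - 1
    · rw [if_pos ⟨hjlt, hb⟩] at hl; rwa [if_pos hb]
    · rw [if_neg (by tauto)] at hl; rwa [if_neg hb]
  -- m0 line
  have hm0lt : ((i:ℕ) + (j:ℕ)) % n < n := Nat.mod_lt _ hn0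
  have hm0 := hline _ hm0lt
  rw [CU2aux_lineEval hn i j hij D hsym hsupp _ hm0lt j i rfl (by rw [Nat.add_comm]),
    if_pos rfl] at hm0
  have hrw : D ⟨n-2, by omega⟩ ⟨n-1, by omega⟩ = D eF fF := rfl
  rw [hrw] at hm0
  -- D eF fF = 0
  have hDef0 : D eF fF = 0 := by
    by_cases hifF : (i:ℕ) = n - 1
    · rw [if_neg (by omega)] at hm0
      rwa [zero_add] at hm0
    · have hk := keyB fF (by intro hc; rw [← hc] at hifF; simp [hfF] at hifF)
      rw [if_neg (by simp [hfF])] at hk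
      rwa [zero_add] at hk
  have hDij : D i j = 0 := by
    by_cases hifF : (i:ℕ) = n - 1
    · have hieF : i = fF := Fin.ext (by rw [hifF])
      rw [hieF, hjeF, hsym]
      exact hDef0
    · rw [if_pos ⟨by omega, by omega⟩, hDef0, add_zero] at hm0
      exact hm0
  -- all of row j
  have hBall : ∀ l : Fin n, D j l = 0 := by
    intro l
    by_cases hli : l = i
    · rw [hli, hsym]; exact hDij
    · have hk := keyB l hli
      rw [hDef0, add_zero] at hk
      by_cases hb : (l:ℕ) < n - 1
      · rwa [if_pos hb] at hk
      · have : l = fF := Fin.ext (by simp [hfF]; omega)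
        rw [this, hjeF]
        exact hDef0
  -- all of row i
  have hAall : ∀ l : Fin n, D i l = 0 := by
    intro l
    by_cases hli : l = i
    · rw [hli]; exact step2
    by_cases hlj : l = j
    · rw [hlj]; exact hDij
    by_cases hlf : (l:ℕ) = n - 1
    · -- l = fF, need row i sum; here i ≠ fF since l ≠ i
      have hlfF : l = fF := Fin.ext (by rw [hlf])
      have hifF : (i:ℕ) ≠ n - 1 := by
        intro hc; exact hli (Fin.ext (by rw [hlf, hc]))
      have hilt : (i:ℕ) < n - 2 := by
        have := i.is_lt; omega
      have hs := hrow i hilt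
      have hmem : fF ∈ univ.filter (fun ℓ : Fin n => (ℓ : ℕ) ≠ n - 2) := by
        simp only [Finset.mem_filter, Finset.mem_univ, true_and, hfF]
        omega
      rw [Finset.sum_eq_single_of_mem fF hmem] at hs
      · rw [hlfF]; exact hs
      · intro b hbmem hbf
        simp only [Finset.mem_filter, Finset.mem_univ, true_and] at hbmem
        by_cases hbi : b = i
        · rw [hbi]; exact step2
        by_cases hbj : b = j
        · rw [hbj]; exact hDij
        · have hbv : (b:ℕ) ≠ n - 1 := by
            intro hc; exact hbf (Fin.ext (by rw [hc]))
          have : (b:ℕ) < n - 2 := by have := b.is_lt; omega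
          rw [hsym]
          exact step1 b hbi this
    · have hlv : (l:ℕ) < n - 2 := by
        have h1 : (l:ℕ) ≠ n - 2 := by
          intro hc; exact hlj (Fin.ext (by rw [hc, hj]))
        have := l.is_lt; omega
      rw [hsym]
      exact step1 l hli hlv
  intro k l
  by_cases hk1 : k = i
  · rw [hk1]; exact hAall l
  by_cases hk2 : k = j
  · rw [hk2]; exact hBall l
  by_cases hl1 : l = i
  · rw [hl1, hsym]; exact hAall k
  by_cases hl2 : l = j
  · rw [hl2, hsym]; exact hBall k
  exact hsupp k l hk1 hk2 hl1 hl2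

set_option maxHeartbeats 1000000 in
private lemma CU2aux_case2b {n : ℕ} (hn : 5 ≤ n) (i j : Fin n) (hij : i ≠ j)
    (hj : (j:ℕ) = n - 1) (hi : (i:ℕ) < n - 2)
    (D : Fin n → Fin n → ZMod 2)
    (hsym : ∀ k l, D k l = D l k)
    (hsupp : ∀ k l : Fin n, k ≠ i → k ≠ j → l ≠ i → l ≠ j → D k l = 0)
    (hrow : ∀ h : Fin n, (h : ℕ) < n - 2 →
      ∑ ℓ ∈ univ.filter (fun ℓ : Fin n => (ℓ : ℕ) ≠ n - 2), D h ℓ = 0)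
    (hdiag : ∑ ℓ ∈ univ.filter (fun ℓ : Fin n => (ℓ : ℕ) ≠ n - 2), D ℓ ℓ = 0)
    (hline : ∀ m : ℕ, m < n →
      (∑ p ∈ univ.filter (fun p : Fin n × Fin n =>
          (p.1 : ℕ) ≤ (p.2 : ℕ) ∧ (p.1 : ℕ) < n - 1 ∧ (p.2 : ℕ) < n - 1 ∧
            ((p.1 : ℕ) + (p.2 : ℕ)) % n = m),
          D p.1 p.2) + D ⟨n - 2, by omega⟩ ⟨n - 1, by omega⟩ = 0) :
    ∀ k l, D k l = 0 := by
  have hn0 : 0 < n := by omega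
  have F2 : ∀ a b : ZMod 2, a + b = 0 → a = b := by decide
  set eF : Fin n := ⟨n - 2, by omega⟩ with heF
  set fF : Fin n := ⟨n - 1, by omega⟩ with hfF
  have hjfF : j = fF := Fin.ext hj
  -- step 1: rows
  have step1 : ∀ h : Fin n, h ≠ i → (h:ℕ) < n - 2 → D h i + D h j = 0 := by
    intro h hhi hlt
    have hhj : h ≠ j := by intro hc; rw [hc, hj] at hlt; omega
    have hs := hrow h hlt
    rw [CU2aux_rowEval i j hij D hsupp h hhi hhj, if_pos (by omega), if_pos (by omega)] at hs
    exact hs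
  -- step 2: diagonal
  have step2 : D i i + D j j = 0 := by
    have hs := hdiag
    rw [CU2aux_diagEval i j hij D hsupp, if_pos (by omega), if_pos (by omega)] at hs
    exact hs
  -- m0 line gives D eF fF = 0
  have hm0lt : ((i:ℕ) + (j:ℕ)) % n < n := Nat.mod_lt _ hn0
  have hm0 := hline _ hm0lt
  rw [CU2aux_lineEval hn i j hij D hsym hsupp _ hm0lt j i rfl (by rw [Nat.add_comm]),
    if_pos rfl, if_neg (by omega)] at hm0
  have hrw : D ⟨n-2, by omega⟩ ⟨n-1, by omega⟩ = D eF fF := rfl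
  rw [hrw, zero_add] at hm0
  have hDef0 : D eF fF = 0 := hm0
  -- keyA: line relations give row i
  have hA1 : ∀ ℓ : Fin n, ℓ ≠ j → D i ℓ = 0 := by
    intro ℓ hlj
    set m : ℕ := ((i:ℕ) + (ℓ:ℕ)) % n with hm
    have hmlt : m < n := Nat.mod_lt _ hn0
    set Tj : Fin n := ⟨(m + (n - (j:ℕ))) % n, Nat.mod_lt _ hn0⟩ with hTjdef
    have hTj : ((j:ℕ) + (Tj:ℕ)) % n = m := CU2aux_add_solve hn0 hmlt j.is_lt
    have hl := hline m hmlt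
    rw [CU2aux_lineEval hn i j hij D hsym hsupp m hmlt ℓ Tj rfl hTj, if_neg hlj,
      if_neg (by omega : ¬((j:ℕ) < n-1 ∧ (Tj:ℕ) < n-1)), add_zero] at hl
    have hlv : (ℓ:ℕ) < n - 1 := by
      have h1 : (ℓ:ℕ) ≠ n - 1 := by intro hc; exact hlj (Fin.ext (by rw [hc, hj]))
      have := ℓ.is_lt; omega
    rw [if_pos ⟨by omega, hlv⟩, hrw, hDef0, add_zero] at hl
    exact hl
  -- row i at j
  have hAall : ∀ l : Fin n, D i l = 0 := by
    intro l
    by_cases hlj : l = j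
    · rw [hlj, hjfF]
      have hs := hrow i hi
      have hmem : fF ∈ univ.filter (fun ℓ : Fin n => (ℓ : ℕ) ≠ n - 2) := by
        simp only [Finset.mem_filter, Finset.mem_univ, true_and, hfF]
        omega
      rw [Finset.sum_eq_single_of_mem fF hmem
        (fun b _ hbf => hA1 b (fun hc => hbf (by rw [hc, hjfF])))] at hs
      exact hs
    · exact hA1 l hlj
  -- row j
  have hBall : ∀ l : Fin n, D j l = 0 := by
    intro l
    by_cases hli : l = i
    · rw [hli, hsym]; exact hAall j
    by_cases hlj : l = j
    · rw [hlj]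
      have := F2 _ _ step2
      rw [← this]; exact hAall i
    by_cases hle : (l:ℕ) = n - 2
    · have : l = eF := Fin.ext (by rw [hle])
      rw [this, hjfF, hsym]
      exact hDef0
    · have hlv : (l:ℕ) < n - 2 := by
        have h1 : (l:ℕ) ≠ n - 1 := by intro hc; exact hlj (Fin.ext (by rw [hc, hj]))
        have := l.is_lt; omega
      have hs := step1 l hli hlv
      have : D l i = 0 := by rw [hsym]; exact hAall l
      rw [this, zero_add] at hs
      rw [hsym]; exact hs
  intro k l
  by_cases hk1 : k = i
  · rw [hk1]; exact hAall l
  by_cases hk2 : k = j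
  · rw [hk2]; exact hBall l
  by_cases hl1 : l = i
  · rw [hl1, hsym]; exact hAall k
  by_cases hl2 : l = j
  · rw [hl2, hsym]; exact hBall k
  exact hsupp k l hk1 hk2 hl1 hl2

/-- Correctness of Construction 4: for prime `n ≥ 5` the code `C_{U_2}` is an undirected
double-node-erasure-correcting code: any two labelings of `C_{U_2}` agreeing on every
unordered pair avoiding two failed nodes `i, j` are equal. -/
theorem CU2_double_node_erasure_correcting (n : ℕ) (hn : 5 ≤ n) (hp : Nat.Prime n)
    (i j : Fin n) (hij : i ≠ j)
    (L1 L2 : Fin n → Fin n → ZMod 2) (h1 : L1 ∈ CU2 n hn) (h2 : L2 ∈ CU2 n hn)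
    (hagree : ∀ k ℓ : Fin n, k ≠ i → k ≠ j → ℓ ≠ i → ℓ ≠ j → L1 k ℓ = L2 k ℓ) :
    L1 = L2 := by
  simp only [CU2, Set.mem_setOf_eq] at h1 h2
  obtain ⟨hs1, hr1, hd1, hl1⟩ := h1
  obtain ⟨hs2, hr2, hd2, hl2⟩ := h2
  have F2 : ∀ a b : ZMod 2, a + b = 0 → a = b := by decide
  set D : Fin n → Fin n → ZMod 2 := fun k l => L1 k l + L2 k l with hD
  have hsym : ∀ k l, D k l = D l k := by
    intro k l; simp only [hD]; rw [hs1, hs2]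
  have hsupp : ∀ k l : Fin n, k ≠ i → k ≠ j → l ≠ i → l ≠ j → D k l = 0 := by
    intro k l a b c d
    simp only [hD]
    rw [hagree k l a b c d]
    have : ∀ a : ZMod 2, a + a = 0 := by decide
    exact this _
  have hrow : ∀ h : Fin n, (h : ℕ) < n - 2 →
      ∑ ℓ ∈ univ.filter (fun ℓ : Fin n => (ℓ : ℕ) ≠ n - 2), D h ℓ = 0 := by
    intro h hh
    simp only [hD, Finset.sum_add_distrib]
    rw [hr1 h hh, hr2 h hh, add_zero]
  have hdiag : ∑ ℓ ∈ univ.filter (fun ℓ : Fin n => (ℓ : ℕ) ≠ n - 2), D ℓ ℓ = 0 := by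
    simp only [hD, Finset.sum_add_distrib]
    rw [hd1, hd2, add_zero]
  have hline : ∀ m : ℕ, m < n →
      (∑ p ∈ univ.filter (fun p : Fin n × Fin n =>
          (p.1 : ℕ) ≤ (p.2 : ℕ) ∧ (p.1 : ℕ) < n - 1 ∧ (p.2 : ℕ) < n - 1 ∧
            ((p.1 : ℕ) + (p.2 : ℕ)) % n = m),
          D p.1 p.2) + D ⟨n - 2, by omega⟩ ⟨n - 1, by omega⟩ = 0 := by
    intro m hm
    have e1 := hl1 m hm
    have e2 := hl2 m hm
    simp only [hD, Finset.sum_add_distrib]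
    linear_combination e1 + e2
  have hsupp' : ∀ k l : Fin n, k ≠ j → k ≠ i → l ≠ j → l ≠ i → D k l = 0 :=
    fun k l a b c d => hsupp k l b a d c
  have hzero : ∀ k l, D k l = 0 := by
    by_cases hie : (i:ℕ) = n - 2
    · exact CU2aux_case2a hn j i hij.symm hie D hsym hsupp' hrow hdiag hline
    by_cases hje : (j:ℕ) = n - 2
    · exact CU2aux_case2a hn i j hij hje D hsym hsupp hrow hdiag hline
    by_cases hjf : (j:ℕ) = n - 1
    · have hilt : (i:ℕ) < n - 2 := by
        have h1 : (i:ℕ) ≠ n - 1 := fun hc => hij (Fin.ext (by rw [hc, hjf]))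
        have := i.is_lt; omega
      exact CU2aux_case2b hn i j hij hjf hilt D hsym hsupp hrow hdiag hline
    by_cases hif : (i:ℕ) = n - 1
    · have hjlt : (j:ℕ) < n - 2 := by have := j.is_lt; omega
      exact CU2aux_case2b hn j i hij.symm hif hjlt D hsym hsupp' hrow hdiag hline
    · have hilt : (i:ℕ) < n - 2 := by have := i.is_lt; omega
      have hjlt : (j:ℕ) < n - 2 := by have := j.is_lt; omega
      exact CU2aux_case1 hn hp i j hij hilt hjlt D hsym hsupp hrow hdiag hline
  funext k l
  have hz := hzero k l
  simp only [hD] at hz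
  exact F2 _ _ hz
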